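/- Let (ω_k) be strictly positive weights with β(0)=1, β(n)=ω_0⋯ω_{n-1} and sup_{n,k} β(n+k)/β(n) < ∞ (equivalently the weighted shift S_ω on ℓ²(H) is power bounded). Let T be an operator on K similar to a contraction and X : ℓ²(H) → K bounded. If R(X) = [[T, X],[0, S_ω]] is β-quadratically near R(0) = T ⊕ S_ω modulo the subspace H = H⊕0⊕⋯ of ℓ²(H), then R(X) is similar to a contraction. -/

import Mathlib

open ContinuousLinearMap

variable {K H : Type*}
  [NormedAddCommGroup K] [InnerProductSpace ℂ K] [CompleteSpace K]
  [NormedAddCommGroup H] [InnerProductSpace ℂ H] [CompleteSpace H]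

/-- The block operator matrix `[[T, X], [0, V]]` on the Hilbert space direct sum. -/
noncomputable def blockOp (T : K →L[ℂ] K) (X : H →L[ℂ] K) (V : H →L[ℂ] H) :
    WithLp 2 (K × H) →L[ℂ] WithLp 2 (K × H) :=
  ((WithLp.prodContinuousLinearEquiv 2 ℂ K H).symm : K × H →L[ℂ] WithLp 2 (K × H)) ∘L
    ((T ∘L fst ℂ K H + X ∘L snd ℂ K H).prod (V ∘L snd ℂ K H)) ∘L
    ((WithLp.prodContinuousLinearEquiv 2 ℂ K H) : WithLp 2 (K × H) →L[ℂ] K × H)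

/-- An operator is similar to a contraction if some conjugate of it by a bounded invertible
operator has norm at most `1`. -/
def SimilarToContraction {E : Type*} [NormedAddCommGroup E] [NormedSpace ℂ E]
    (S : E →L[ℂ] E) : Prop :=
  ∃ L : E ≃L[ℂ] E, ‖(L.symm : E →L[ℂ] E) ∘L S ∘L (L : E →L[ℂ] E)‖ ≤ 1


set_option linter.unusedSectionVars false
set_option linter.unusedVariables false
set_option maxHeartbeats 1000000

local notation "e" => WithLp.prodContinuousLinearEquiv 2 ℂ

theorem blockOp_apply (T : K →L[ℂ] K) (X : H →L[ℂ] K) (V : H →L[ℂ] H) (x : K) (y : H) :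
    blockOp T X V ((e K H).symm (x, y)) = (e K H).symm (T x + X y, V y) := by
  simp [blockOp]

theorem blockOp_apply' (T : K →L[ℂ] K) (X : H →L[ℂ] K) (V : H →L[ℂ] H) (z : WithLp 2 (K × H)) :
    blockOp T X V z = (e K H).symm (T (e K H z).1 + X (e K H z).2, V (e K H z).2) := by
  simp [blockOp]

theorem blockOp_comp (T T' : K →L[ℂ] K) (X X' : H →L[ℂ] K) (V V' : H →L[ℂ] H) :
    blockOp T X V ∘L blockOp T' X' V' =
      blockOp (T ∘L T') (T ∘L X' + X ∘L V') (V ∘L V') := by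
  ext z
  simp [blockOp_apply', map_add, add_assoc]

theorem blockOp_one : blockOp (1 : K →L[ℂ] K) (0 : H →L[ℂ] K) (1 : H →L[ℂ] H) = 1 := by
  ext z
  simp [blockOp_apply']
  rfl

theorem norm_esymm (x : K) (y : H) :
    ‖(e K H).symm (x, y)‖ ^ 2 = ‖x‖ ^ 2 + ‖y‖ ^ 2 := by
  simp [WithLp.prod_norm_sq_eq_of_L2]

theorem norm_esymm_fst (x : K) : ‖(e K H).symm (x, (0:H))‖ = ‖x‖ := by
  rw [WithLp.prodContinuousLinearEquiv_symm_apply]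
  exact WithLp.norm_toLp_fst 2 K H x

theorem blockOp_norm_le (T : K →L[ℂ] K) (V : H →L[ℂ] H) (hT : ‖T‖ ≤ 1) (hV : ‖V‖ ≤ 1) :
    ‖blockOp T 0 V‖ ≤ 1 := by
  refine opNorm_le_bound _ zero_le_one fun z => ?_
  rw [one_mul, blockOp_apply']
  have h1 : ‖T (e K H z).1‖ ≤ ‖(e K H z).1‖ := by
    calc ‖T (e K H z).1‖ ≤ ‖T‖ * ‖(e K H z).1‖ := le_opNorm _ _
    _ ≤ 1 * ‖(e K H z).1‖ := by gcongr
    _ = _ := one_mul _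
  have h2 : ‖V (e K H z).2‖ ≤ ‖(e K H z).2‖ := by
    calc ‖V (e K H z).2‖ ≤ ‖V‖ * ‖(e K H z).2‖ := le_opNorm _ _
    _ ≤ 1 * ‖(e K H z).2‖ := by gcongr
    _ = _ := one_mul _
  have key : ‖(e K H).symm (T (e K H z).1 + (0 : H →L[ℂ] K) (e K H z).2, V (e K H z).2)‖ ^ 2
      ≤ ‖z‖ ^ 2 := by
    rw [norm_esymm]
    have hz : ‖z‖ ^ 2 = ‖(e K H z).1‖ ^ 2 + ‖(e K H z).2‖ ^ 2 := by
      rw [WithLp.prod_norm_sq_eq_of_L2]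
      rw [WithLp.prodContinuousLinearEquiv_apply, WithLp.ofLp_fst, WithLp.ofLp_snd]
    rw [hz]
    simp only [zero_apply, add_zero]
    gcongr
  calc ‖(e K H).symm (T (e K H z).1 + (0 : H →L[ℂ] K) (e K H z).2, V (e K H z).2)‖
      = Real.sqrt (‖(e K H).symm (T (e K H z).1 + (0 : H →L[ℂ] K) (e K H z).2, V (e K H z).2)‖ ^ 2) := by
        rw [Real.sqrt_sq (norm_nonneg _)]
    _ ≤ Real.sqrt (‖z‖ ^ 2) := Real.sqrt_le_sqrt key
    _ = ‖z‖ := Real.sqrt_sq (norm_nonneg _)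

/-- off-diagonal entries of powers of a block triangular operator -/
noncomputable def blockX (T : K →L[ℂ] K) (X : H →L[ℂ] K) (V : H →L[ℂ] H) : ℕ → (H →L[ℂ] K)
  | 0 => 0
  | n + 1 => T ∘L blockX T X V n + X ∘L V ^ n

theorem blockOp_pow (T : K →L[ℂ] K) (X : H →L[ℂ] K) (V : H →L[ℂ] H) (n : ℕ) :
    blockOp T X V ^ n = blockOp (T ^ n) (blockX T X V n) (V ^ n) := by
  induction n with
  | zero => simpa [blockX] using blockOp_one.symm
  | succ n ih =>
    rw [pow_succ', ih, mul_def, blockOp_comp]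
    rw [blockX]
    congr 1 <;> rw [← mul_def, ← pow_succ']

theorem blockX_zero (T : K →L[ℂ] K) (V : H →L[ℂ] H) (n : ℕ) :
    blockX T 0 V n = 0 := by
  induction n with
  | zero => rfl
  | succ n ih => rw [blockX, ih]; simp

theorem lp_single_add (i : ℕ) (a b : H) :
    lp.single (E := fun _ : ℕ => H) 2 i (a + b) =
      lp.single 2 i a + lp.single 2 i b := by
  apply lp.ext
  funext j
  rcases eq_or_ne j i with rfl | hj
  · simp [lp.single_apply_self]
  · simp [lp.single_apply_ne _ _ _ hj]

theorem lp_single_zero (i : ℕ) :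
    lp.single (E := fun _ : ℕ => H) 2 i (0 : H) = 0 := by
  apply lp.ext
  funext j
  rcases eq_or_ne j i with rfl | hj
  · simp [lp.single_apply_self]
  · simp [lp.single_apply_ne _ _ _ hj]

theorem lp_norm_single (i : ℕ) (a : H) :
    ‖lp.single (E := fun _ : ℕ => H) 2 i a‖ = ‖a‖ := by
  have := lp.norm_single (E := fun _ : ℕ => H) (p := 2) (by norm_num)
    i a
  simpa using this

theorem lp_norm_sq (y : lp (fun _ : ℕ => H) 2) : ‖y‖ ^ 2 = ∑' n, ‖y n‖ ^ 2 := by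
  have h := lp.norm_rpow_eq_tsum (p := 2) (E := fun _ : ℕ => H) (by norm_num) y
  have h2 : (2 : ENNReal).toReal = (2 : ℝ) := by norm_num
  rw [h2] at h
  calc ‖y‖ ^ 2 = ‖y‖ ^ (2:ℝ) := by rw [← Real.rpow_natCast ‖y‖ 2]; norm_num
  _ = ∑' n, ‖y n‖ ^ (2:ℝ) := h
  _ = ∑' n, ‖y n‖ ^ 2 := by
      congr 1; funext n; rw [← Real.rpow_natCast ‖y n‖ 2]; norm_num

theorem lp_summable_sq (y : lp (fun _ : ℕ => H) 2) : Summable (fun n => ‖y n‖ ^ 2) := by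
  have h := ((lp.memℓp y).summable (p := 2) (by norm_num))
  have : (fun n => ‖y n‖ ^ (2:ENNReal).toReal) = fun n => ‖y n‖ ^ 2 := by
    funext n
    have h2 : (2 : ENNReal).toReal = (2 : ℝ) := by norm_num
    rw [h2, ← Real.rpow_natCast ‖y n‖ 2]; norm_num
  rwa [this] at h

theorem memℓp_two (f : ℕ → H) (h : Summable fun n => ‖f n‖ ^ 2) :
    Memℓp f (2 : ENNReal) := by
  apply memℓp_gen
  have : (fun n => ‖f n‖ ^ (2:ENNReal).toReal) = fun n => ‖f n‖ ^ 2 := by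
    funext n
    have h2 : (2 : ENNReal).toReal = (2 : ℝ) := by norm_num
    rw [h2, ← Real.rpow_natCast ‖f n‖ 2]; norm_num
  rwa [this]

theorem norm_le_of_sq_le_sq {a b : ℝ} (ha : 0 ≤ a) (hb : 0 ≤ b) (h : a ^ 2 ≤ b ^ 2) :
    a ≤ b := by
  calc a = Real.sqrt (a ^ 2) := (Real.sqrt_sq ha).symm
  _ ≤ Real.sqrt (b ^ 2) := Real.sqrt_le_sqrt h
  _ = b := Real.sqrt_sq hb

/-- A bounded pointwise real multiplier gives a continuous linear map on `ℓ²(H)`. -/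
noncomputable def diagCLM (c : ℕ → ℝ) (C : ℝ) (hC : 0 ≤ C) (hc : ∀ n, |c n| ≤ C) :
    lp (fun _ : ℕ => H) 2 →L[ℂ] lp (fun _ : ℕ => H) 2 := by
  have hterm : ∀ (y : lp (fun _ : ℕ => H) 2) (n : ℕ),
      ‖c n • y n‖ ^ 2 ≤ C ^ 2 * ‖y n‖ ^ 2 := by
    intro y n
    rw [norm_smul, mul_pow]
    have h1 : ‖c n‖ ≤ C := by rw [Real.norm_eq_abs]; exact hc n
    nlinarith [mul_le_mul h1 h1 (norm_nonneg (c n)) hC, sq_nonneg ‖y n‖,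
      sq_nonneg (‖(y : ∀ _ : ℕ, H) n‖)]
  have hsum : ∀ y : lp (fun _ : ℕ => H) 2, Summable fun n => ‖c n • y n‖ ^ 2 := fun y =>
    Summable.of_nonneg_of_le (fun n => by positivity) (fun n => hterm y n)
      ((lp_summable_sq y).mul_left _)
  have mem : ∀ y : lp (fun _ : ℕ => H) 2, Memℓp (fun n => c n • y n) (2 : ENNReal) :=
    fun y => memℓp_two _ (hsum y)
  refine LinearMap.mkContinuous
    { toFun := fun y => (⟨fun n => c n • y n, mem y⟩ : lp (fun _ : ℕ => H) 2)
      map_add' := ?_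
      map_smul' := ?_ } C ?_
  · intro x y
    apply lp.ext
    funext n
    simp only [lp.coeFn_add, Pi.add_apply, smul_add]
  · intro a y
    apply lp.ext
    funext n
    simp only [lp.coeFn_smul, Pi.smul_apply, RingHom.id_apply]
    show c n • a • y n = a • c n • y n
    rw [smul_comm]
  · intro y
    dsimp only [LinearMap.coe_mk, AddHom.coe_mk]
    apply norm_le_of_sq_le_sq (norm_nonneg _) (by positivity)
    rw [mul_pow, lp_norm_sq, lp_norm_sq]
    rw [← tsum_mul_left]
    refine Summable.tsum_le_tsum (fun n => ?_) ?_ ((lp_summable_sq y).mul_left _)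
    · exact hterm y n
    · exact hsum y

theorem diagCLM_apply (c : ℕ → ℝ) (C : ℝ) (hC : 0 ≤ C) (hc : ∀ n, |c n| ≤ C)
    (y : lp (fun _ : ℕ => H) 2) (n : ℕ) :
    diagCLM c C hC hc y n = c n • y n := rfl

theorem shift_similar
    (ω : ℕ → ℝ) (hω : ∀ k, 0 < ω k)
    (β : ℕ → ℝ) (hβ : ∀ n, β n = ∏ k ∈ Finset.range n, ω k)
    (hpb : ∃ M : ℝ, ∀ n k : ℕ, β (n + k) / β n ≤ M)
    (Sω : lp (fun _ : ℕ => H) 2 →L[ℂ] lp (fun _ : ℕ => H) 2)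
    (hS0 : ∀ x : lp (fun _ : ℕ => H) 2, Sω x 0 = 0)
    (hS : ∀ (x : lp (fun _ : ℕ => H) 2) (n : ℕ), Sω x (n + 1) = ω n • x n) :
    SimilarToContraction Sω := by
  obtain ⟨M, hM⟩ := hpb
  have hβpos : ∀ n, 0 < β n := fun n => by
    rw [hβ]; exact Finset.prod_pos fun k _ => hω k
  have hβsucc : ∀ n, β (n + 1) = β n * ω n := fun n => by
    rw [hβ, hβ, Finset.prod_range_succ]
  -- the sup sequence
  set d : ℕ → ℝ := fun n => ⨆ k, β (n + k) / β n with hd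
  have hbdd : ∀ n, BddAbove (Set.range fun k => β (n + k) / β n) := fun n =>
    ⟨M, by rintro x ⟨k, rfl⟩; exact hM n k⟩
  have hd1 : ∀ n, 1 ≤ d n := fun n => by
    have := le_ciSup (hbdd n) 0
    simpa [div_self (hβpos n).ne'] using this
  have hdpos : ∀ n, 0 < d n := fun n => lt_of_lt_of_le one_pos (hd1 n)
  have hdM : ∀ n, d n ≤ M := fun n => ciSup_le fun k => hM n k
  have hM0 : 0 < M := lt_of_lt_of_le one_pos (le_trans (hd1 0) (hdM 0))
  have hkey : ∀ n, ω n * d (n + 1) ≤ d n := by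
    intro n
    have h2 : d (n + 1) ≤ d n / ω n := by
      apply ciSup_le
      intro k
      rw [hβsucc n]
      rw [div_le_div_iff₀ (mul_pos (hβpos n) (hω n)) (hω n)]
      calc β (n + 1 + k) * ω n ≤ d n * β n * ω n := by
            have : β (n + 1 + k) ≤ d n * β n := by
              have h3 : β (n + (k + 1)) / β n ≤ d n := le_ciSup (hbdd n) (k + 1)
              rw [div_le_iff₀ (hβpos n)] at h3
              have : n + 1 + k = n + (k + 1) := by ring
              rw [this]
              linarith [h3]
            nlinarith [hω n]
        _ = d n * (β n * ω n) := by ring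
    calc ω n * d (n + 1) ≤ ω n * (d n / ω n) := by
          apply mul_le_mul_of_nonneg_left h2 (hω n).le
      _ = d n := by rw [mul_comm]; exact div_mul_cancel₀ _ (hω n).ne'
  -- the diagonal operators
  set c : ℕ → ℝ := fun n => (d n)⁻¹ with hc
  have hcpos : ∀ n, 0 < c n := fun n => inv_pos.mpr (hdpos n)
  have hcbound : ∀ n, |c n| ≤ 1 := fun n => by
    rw [abs_of_pos (hcpos n)]
    rw [inv_le_one_iff₀]
    right; exact hd1 n
  have hdbound : ∀ n, |d n| ≤ M := fun n => by
    rw [abs_of_pos (hdpos n)]; exact hdM n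
  set D : lp (fun _ : ℕ => H) 2 →L[ℂ] lp (fun _ : ℕ => H) 2 :=
    diagCLM c 1 zero_le_one hcbound with hD
  set D' : lp (fun _ : ℕ => H) 2 →L[ℂ] lp (fun _ : ℕ => H) 2 :=
    diagCLM d M hM0.le hdbound with hD'
  have hDcoord : ∀ y n, D y n = c n • y n := fun y n => rfl
  have hD'coord : ∀ y n, D' y n = d n • y n := fun y n => rfl
  have hDD' : ∀ y, D (D' y) = y := by
    intro y
    apply lp.ext; funext n
    rw [hDcoord, hD'coord, smul_smul]
    show ((d n)⁻¹ * d n) • _ = _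
    rw [inv_mul_cancel₀ (hdpos n).ne', one_smul]
  have hD'D : ∀ y, D' (D y) = y := by
    intro y
    apply lp.ext; funext n
    rw [hD'coord, hDcoord, smul_smul]
    show (d n * (d n)⁻¹) • _ = _
    rw [mul_inv_cancel₀ (hdpos n).ne', one_smul]
  refine ⟨ContinuousLinearEquiv.equivOfInverse D D' hD'D hDD', ?_⟩
  refine opNorm_le_bound _ zero_le_one fun y => ?_
  rw [one_mul]
  have hcoe : ((ContinuousLinearEquiv.equivOfInverse D D' hD'D hDD').symm :
      lp (fun _ : ℕ => H) 2 →L[ℂ] lp (fun _ : ℕ => H) 2) = D' := rfl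
  have hcoe2 : ((ContinuousLinearEquiv.equivOfInverse D D' hD'D hDD') :
      lp (fun _ : ℕ => H) 2 →L[ℂ] lp (fun _ : ℕ => H) 2) = D := rfl
  rw [comp_apply, comp_apply, hcoe, hcoe2]
  -- coordinates of G y = D' (Sω (D y))
  have hG0 : D' (Sω (D y)) 0 = 0 := by
    rw [hD'coord, hS0, smul_zero]
  have hGsucc : ∀ n, D' (Sω (D y)) (n + 1) = (d (n + 1) * ω n * c n) • y n := by
    intro n
    rw [hD'coord, hS, hDcoord, smul_smul, smul_smul, mul_assoc]
  have hcoeff : ∀ n, 0 ≤ d (n + 1) * ω n * c n ∧ d (n + 1) * ω n * c n ≤ 1 := by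
    intro n
    constructor
    · exact le_of_lt (mul_pos (mul_pos (hdpos _) (hω n)) (hcpos n))
    · show d (n + 1) * ω n * (d n)⁻¹ ≤ 1
      rw [← div_eq_mul_inv, div_le_one (hdpos n)]
      nlinarith [hkey n]
  apply norm_le_of_sq_le_sq (norm_nonneg _) (norm_nonneg _)
  rw [lp_norm_sq, lp_norm_sq]
  have hsummG : Summable fun n => ‖D' (Sω (D y)) n‖ ^ 2 := lp_summable_sq _
  rw [Summable.tsum_eq_zero_add hsummG]
  rw [hG0]
  simp only [norm_zero, ne_eq, OfNat.ofNat_ne_zero, not_false_eq_true, zero_pow, zero_add]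
  refine Summable.tsum_le_tsum (fun n => ?_) ?_ (lp_summable_sq y)
  · rw [hGsucc]
    rw [norm_smul]
    calc (‖d (n + 1) * ω n * c n‖ * ‖y n‖) ^ 2
        ≤ (1 * ‖y n‖) ^ 2 := by
          gcongr
          rw [Real.norm_eq_abs, abs_of_nonneg (hcoeff n).1]
          exact (hcoeff n).2
      _ = ‖y n‖ ^ 2 := by ring
  · refine Summable.of_nonneg_of_le (fun n => by positivity) (fun n => ?_) (lp_summable_sq y)
    rw [hGsucc, norm_smul]
    calc (‖d (n + 1) * ω n * c n‖ * ‖y n‖) ^ 2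
        ≤ (1 * ‖y n‖) ^ 2 := by
          gcongr
          rw [Real.norm_eq_abs, abs_of_nonneg (hcoeff n).1]
          exact (hcoeff n).2
      _ = ‖y n‖ ^ 2 := by ring

section Zsection

variable (ω : ℕ → ℝ) (β : ℕ → ℝ)
  (Sω : lp (fun _ : ℕ => H) 2 →L[ℂ] lp (fun _ : ℕ => H) 2)

theorem Sω_single (hS0 : ∀ x : lp (fun _ : ℕ => H) 2, Sω x 0 = 0)
    (hS : ∀ (x : lp (fun _ : ℕ => H) 2) (n : ℕ), Sω x (n + 1) = ω n • x n)
    (m : ℕ) (a : H) :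
    Sω (lp.single 2 m a) = lp.single 2 (m + 1) (ω m • a) := by
  apply lp.ext
  funext j
  cases j with
  | zero =>
    rw [hS0]
    rw [lp.single_apply_ne _ _ _ (by omega : (0:ℕ) ≠ m + 1)]
  | succ n =>
    rw [hS]
    rcases eq_or_ne n m with rfl | hnm
    · rw [lp.single_apply_self, lp.single_apply_self]
    · rw [lp.single_apply_ne _ _ _ hnm, lp.single_apply_ne _ _ _ (by omega : n + 1 ≠ m + 1),
        smul_zero]

theorem Sω_pow_single (hω : ∀ k, 0 < ω k)
    (hβ : ∀ n, β n = ∏ k ∈ Finset.range n, ω k)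
    (hS0 : ∀ x : lp (fun _ : ℕ => H) 2, Sω x 0 = 0)
    (hS : ∀ (x : lp (fun _ : ℕ => H) 2) (n : ℕ), Sω x (n + 1) = ω n • x n)
    (m : ℕ) (a : H) :
    (Sω ^ m) (lp.single 2 0 a) = β m • lp.single 2 m a := by
  induction m with
  | zero =>
    rw [pow_zero]
    have : β 0 = 1 := by rw [hβ]; simp
    rw [this, one_smul]
    rfl
  | succ m ih =>
    rw [pow_succ', mul_apply_eq_comp, ih, map_smul_of_tower, Sω_single ω Sω hS0 hS]
    rw [lp.single_smul]
    rw [smul_smul]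
    have : β (m + 1) = β m * ω m := by rw [hβ, hβ, Finset.prod_range_succ]
    rw [this]

end Zsection

theorem pow_diff_apply (T : K →L[ℂ] K) (X : lp (fun _ : ℕ => H) 2 →L[ℂ] K)
    (Sω : lp (fun _ : ℕ => H) 2 →L[ℂ] lp (fun _ : ℕ => H) 2) (n : ℕ)
    (u : lp (fun _ : ℕ => H) 2) :
    (blockOp T X Sω ^ n - blockOp T 0 Sω ^ n)
        ((WithLp.prodContinuousLinearEquiv 2 ℂ K (lp (fun _ : ℕ => H) 2)).symm (0, u)) =
      (WithLp.prodContinuousLinearEquiv 2 ℂ K (lp (fun _ : ℕ => H) 2)).symm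
        (blockX T X Sω n u, 0) := by
  rw [sub_apply, blockOp_pow, blockOp_pow, blockX_zero, blockOp_apply, blockOp_apply]
  rw [← map_sub]
  congr 1
  rw [Prod.mk_sub_mk]
  simp

theorem exists_Z
    (ω : ℕ → ℝ) (hω : ∀ k, 0 < ω k)
    (β : ℕ → ℝ) (hβ : ∀ n, β n = ∏ k ∈ Finset.range n, ω k)
    (Sω : lp (fun _ : ℕ => H) 2 →L[ℂ] lp (fun _ : ℕ => H) 2)
    (hS0 : ∀ x : lp (fun _ : ℕ => H) 2, Sω x 0 = 0)
    (hS : ∀ (x : lp (fun _ : ℕ => H) 2) (n : ℕ), Sω x (n + 1) = ω n • x n)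
    (T : K →L[ℂ] K) (X : lp (fun _ : ℕ => H) 2 →L[ℂ] K)
    (hnear : ∃ s : ℝ, ∀ (N : ℕ) (h : ℕ → H),
      ‖∑ n ∈ Finset.range (N + 1), (β n)⁻¹ •
          blockX T X Sω n (lp.single 2 0 (h n))‖ ≤
        s * Real.sqrt (∑ n ∈ Finset.range (N + 1), ‖h n‖ ^ 2)) :
    ∃ Z : lp (fun _ : ℕ => H) 2 →L[ℂ] K, ∀ y, Z (Sω y) = T (Z y) + X y := by
  obtain ⟨s, hsraw⟩ := hnear
  set s' : ℝ := max s 0 with hs'def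
  have hs'0 : 0 ≤ s' := le_max_right _ _
  have hs : ∀ (N : ℕ) (h : ℕ → H),
      ‖∑ n ∈ Finset.range (N + 1), (β n)⁻¹ • blockX T X Sω n (lp.single 2 0 (h n))‖ ≤
        s' * Real.sqrt (∑ n ∈ Finset.range (N + 1), ‖h n‖ ^ 2) := fun N h =>
    le_trans (hsraw N h)
      (mul_le_mul_of_nonneg_right (le_max_left _ _) (Real.sqrt_nonneg _))
  clear hsraw
  have hβpos : ∀ n, 0 < β n := fun n => by
    rw [hβ]; exact Finset.prod_pos fun k _ => hω k
  have hβsucc : ∀ n, β (n + 1) = β n * ω n := fun n => by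
    rw [hβ, hβ, Finset.prod_range_succ]
  -- uniform finite-set estimate
  have keyFinset : ∀ (t : Finset ℕ) (h : ℕ → H),
      ‖∑ n ∈ t, (β n)⁻¹ • blockX T X Sω n (lp.single 2 0 (h n))‖ ≤
        s' * Real.sqrt (∑ n ∈ t, ‖h n‖ ^ 2) := by
    intro t h
    set N := t.sup id with hN
    have hsub : t ⊆ Finset.range (N + 1) := fun n hn =>
      Finset.mem_range.mpr (Nat.lt_succ_of_le (Finset.le_sup (f := id) hn))
    set h' : ℕ → H := fun n => if n ∈ t then h n else 0 with hh'
    have h1 : ∑ n ∈ Finset.range (N + 1), (β n)⁻¹ • blockX T X Sω n (lp.single 2 0 (h' n)) =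
        ∑ n ∈ t, (β n)⁻¹ • blockX T X Sω n (lp.single 2 0 (h n)) := by
      rw [← Finset.sum_subset hsub (fun n _ hn => ?_)]
      · refine Finset.sum_congr rfl fun n hn => ?_
        rw [hh']
        simp only [if_pos hn]
      · rw [hh']
        simp only [if_neg hn, lp_single_zero, map_zero, smul_zero]
    have h2 : ∑ n ∈ Finset.range (N + 1), ‖h' n‖ ^ 2 = ∑ n ∈ t, ‖h n‖ ^ 2 := by
      rw [← Finset.sum_subset hsub (fun n _ hn => ?_)]
      · refine Finset.sum_congr rfl fun n hn => ?_
        rw [hh']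
        simp only [if_pos hn]
      · rw [hh']
        simp only [if_neg hn, norm_zero]
        norm_num
    calc ‖∑ n ∈ t, (β n)⁻¹ • blockX T X Sω n (lp.single 2 0 (h n))‖
        = ‖∑ n ∈ Finset.range (N + 1), (β n)⁻¹ • blockX T X Sω n (lp.single 2 0 (h' n))‖ := by
          rw [h1]
      _ ≤ s' * Real.sqrt (∑ n ∈ Finset.range (N + 1), ‖h' n‖ ^ 2) := hs N h'
      _ = s' * Real.sqrt (∑ n ∈ t, ‖h n‖ ^ 2) := by rw [h2]
  -- summability of the series defining Z
  set g : lp (fun _ : ℕ => H) 2 → ℕ → K :=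
    fun y n => (β n)⁻¹ • blockX T X Sω n (lp.single 2 0 (y n)) with hg
  have hsummable : ∀ y : lp (fun _ : ℕ => H) 2, Summable (g y) := by
    intro y
    rw [summable_iff_vanishing_norm]
    intro ε hε
    have hδ : (0:ℝ) < (ε / (s' + 1)) ^ 2 := by positivity
    obtain ⟨t₀, ht₀⟩ := summable_iff_vanishing_norm.mp (lp_summable_sq y) _ hδ
    refine ⟨t₀, fun t ht => ?_⟩
    have h2 : ∑ n ∈ t, ‖y n‖ ^ 2 < (ε / (s' + 1)) ^ 2 := by
      have := ht₀ t ht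
      rwa [Real.norm_eq_abs,
        abs_of_nonneg (Finset.sum_nonneg fun n _ => by positivity)] at this
    calc ‖∑ n ∈ t, g y n‖ ≤ s' * Real.sqrt (∑ n ∈ t, ‖y n‖ ^ 2) := keyFinset t _
      _ ≤ s' * Real.sqrt ((ε / (s' + 1)) ^ 2) := by
          apply mul_le_mul_of_nonneg_left (Real.sqrt_le_sqrt h2.le) hs'0
      _ = s' * (ε / (s' + 1)) := by rw [Real.sqrt_sq (by positivity)]
      _ < ε := by
          rw [mul_div_assoc']
          rw [div_lt_iff₀ (by positivity : (0:ℝ) < s' + 1)]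
          nlinarith
  -- uniform bound on partial sums
  have hbound : ∀ (y : lp (fun _ : ℕ => H) 2) (t : Finset ℕ),
      ‖∑ n ∈ t, g y n‖ ≤ s' * ‖y‖ := by
    intro y t
    refine le_trans (keyFinset t _) (mul_le_mul_of_nonneg_left ?_ hs'0)
    have h1 : ∑ n ∈ t, ‖y n‖ ^ 2 ≤ ∑' n, ‖y n‖ ^ 2 :=
      Summable.sum_le_tsum t (fun n _ => by positivity) (lp_summable_sq y)
    calc Real.sqrt (∑ n ∈ t, ‖y n‖ ^ 2) ≤ Real.sqrt (∑' n, ‖y n‖ ^ 2) :=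
          Real.sqrt_le_sqrt h1
      _ = Real.sqrt (‖y‖ ^ 2) := by rw [lp_norm_sq]
      _ = ‖y‖ := Real.sqrt_sq (norm_nonneg _)
  -- the operator Z
  have hZadd : ∀ x y : lp (fun _ : ℕ => H) 2,
      (∑' n, g (x + y) n) = (∑' n, g x n) + ∑' n, g y n := by
    intro x y
    have hxy : ∀ n, g (x + y) n = g x n + g y n := by
      intro n
      simp only [hg]
      rw [lp.coeFn_add, Pi.add_apply, lp_single_add, map_add, smul_add]
    rw [show g (x + y) = fun n => g x n + g y n from funext hxy]
    exact Summable.tsum_add (hsummable x) (hsummable y)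
  have hZsmul : ∀ (c : ℂ) (y : lp (fun _ : ℕ => H) 2),
      (∑' n, g (c • y) n) = c • ∑' n, g y n := by
    intro c y
    have hcy : ∀ n, g (c • y) n = c • g y n := by
      intro n
      simp only [hg]
      rw [lp.coeFn_smul, Pi.smul_apply, lp.single_smul, map_smul, smul_comm]
    rw [show g (c • y) = fun n => c • g y n from funext hcy]
    exact ((hsummable y).hasSum.const_smul c).tsum_eq
  set Z : lp (fun _ : ℕ => H) 2 →L[ℂ] K := LinearMap.mkContinuous
    { toFun := fun y => ∑' n, g y n
      map_add' := hZadd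
      map_smul' := fun c y => hZsmul c y } s' (fun y => by
        dsimp only [LinearMap.coe_mk, AddHom.coe_mk]
        exact le_of_tendsto ((continuous_norm.tendsto _).comp (hsummable y).hasSum)
          (Filter.Eventually.of_forall fun t => hbound y t)) with hZ
  have hZapply : ∀ y, Z y = ∑' n, g y n := fun y => rfl
  have Z_single : ∀ (m : ℕ) (a : H),
      Z (lp.single 2 m a) = (β m)⁻¹ • blockX T X Sω m (lp.single 2 0 a) := by
    intro m a
    rw [hZapply]
    rw [tsum_eq_single m ?_]
    · simp only [hg]
      rw [lp.single_apply_self]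
    · intro n hnm
      simp only [hg]
      rw [lp.single_apply_ne _ _ _ hnm, lp_single_zero, map_zero, smul_zero]
  refine ⟨Z, fun y => ?_⟩
  -- check the intertwining relation on basis vectors
  have hterm : ∀ n : ℕ, (Z ∘L Sω) (lp.single 2 n (y n)) =
      (T ∘L Z + X) (lp.single 2 n (y n)) := by
    intro n
    rw [comp_apply, Sω_single ω Sω hS0 hS, Z_single, lp.single_smul, map_smul_of_tower,
      smul_smul]
    have hsc : (β (n + 1))⁻¹ * ω n = (β n)⁻¹ := by
      rw [hβsucc, mul_inv, mul_assoc, inv_mul_cancel₀ (hω n).ne', mul_one]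
    rw [hsc]
    have hXsucc : blockX T X Sω (n + 1) = T ∘L blockX T X Sω n + X ∘L Sω ^ n := rfl
    rw [hXsucc]
    rw [add_apply, comp_apply, comp_apply, smul_add]
    rw [Sω_pow_single ω β Sω hω hβ hS0 hS, map_smul_of_tower, smul_smul,
      inv_mul_cancel₀ (hβpos n).ne', one_smul]
    rw [add_apply, comp_apply, Z_single]
    rw [map_smul_of_tower]
  have h1 : HasSum (fun n => lp.single 2 n (y n)) y :=
    lp.hasSum_single (by norm_num) y
  have hF : HasSum (fun n => (Z ∘L Sω) (lp.single 2 n (y n))) ((Z ∘L Sω) y) :=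
    h1.mapL _
  have hG2 : HasSum (fun n => (T ∘L Z + X) (lp.single 2 n (y n))) ((T ∘L Z + X) y) :=
    h1.mapL _
  have heq : (Z ∘L Sω) y = (T ∘L Z + X) y := by
    refine hF.unique ?_
    rw [show (fun n => (Z ∘L Sω) (lp.single 2 n (y n)))
      = fun n => (T ∘L Z + X) (lp.single 2 n (y n)) from funext hterm]
    exact hG2
  rw [comp_apply] at heq
  rw [heq]
  rw [add_apply, comp_apply]

theorem hnear_reduce
    (β : ℕ → ℝ)
    (Sω : lp (fun _ : ℕ => H) 2 →L[ℂ] lp (fun _ : ℕ => H) 2)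
    (T : K →L[ℂ] K) (X : lp (fun _ : ℕ => H) 2 →L[ℂ] K)
    (hnear : ∃ s : ℝ, ∀ (N : ℕ) (h : ℕ → H),
      ‖∑ n ∈ Finset.range (N + 1), (β n)⁻¹ •
          ((blockOp T X Sω ^ n - blockOp T 0 Sω ^ n)
            ((WithLp.prodContinuousLinearEquiv 2 ℂ K (lp (fun _ : ℕ => H) 2)).symm
              (0, lp.single 2 0 (h n))))‖ ≤
        s * Real.sqrt (∑ n ∈ Finset.range (N + 1), ‖h n‖ ^ 2)) :
    ∃ s : ℝ, ∀ (N : ℕ) (h : ℕ → H),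
      ‖∑ n ∈ Finset.range (N + 1), (β n)⁻¹ •
          blockX T X Sω n (lp.single 2 0 (h n))‖ ≤
        s * Real.sqrt (∑ n ∈ Finset.range (N + 1), ‖h n‖ ^ 2) := by
  obtain ⟨s, hs⟩ := hnear
  refine ⟨s, fun N h => ?_⟩
  have key : ∑ n ∈ Finset.range (N + 1), (β n)⁻¹ •
      ((blockOp T X Sω ^ n - blockOp T 0 Sω ^ n)
        ((WithLp.prodContinuousLinearEquiv 2 ℂ K (lp (fun _ : ℕ => H) 2)).symm
          (0, lp.single 2 0 (h n)))) =
      (WithLp.prodContinuousLinearEquiv 2 ℂ K (lp (fun _ : ℕ => H) 2)).symm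
        (∑ n ∈ Finset.range (N + 1), (β n)⁻¹ • blockX T X Sω n (lp.single 2 0 (h n)), 0) := by
    have hterm : ∀ n ∈ Finset.range (N + 1), (β n)⁻¹ •
        ((blockOp T X Sω ^ n - blockOp T 0 Sω ^ n)
          ((WithLp.prodContinuousLinearEquiv 2 ℂ K (lp (fun _ : ℕ => H) 2)).symm
            (0, lp.single 2 0 (h n)))) =
        (WithLp.prodContinuousLinearEquiv 2 ℂ K (lp (fun _ : ℕ => H) 2)).symm
          ((β n)⁻¹ • blockX T X Sω n (lp.single 2 0 (h n)), 0) := by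
      intro n _
      rw [pow_diff_apply]
      have hsm := ContinuousLinearMap.map_smul_of_tower
        ((WithLp.prodContinuousLinearEquiv 2 ℂ K (lp (fun _ : ℕ => H) 2)).symm :
          K × lp (fun _ : ℕ => H) 2 →L[ℂ] WithLp 2 (K × lp (fun _ : ℕ => H) 2)) (β n)⁻¹
        ((blockX T X Sω n (lp.single 2 0 (h n)), 0) : K × lp (fun _ : ℕ => H) 2)
      simp only [ContinuousLinearEquiv.coe_coe] at hsm
      rw [← hsm]
      congr 1
      rw [Prod.smul_mk, smul_zero]
    rw [Finset.sum_congr rfl hterm]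
    rw [← map_sum]
    congr 1
    have hmk := prod_mk_sum (Finset.range (N + 1))
      (fun n => (β n)⁻¹ • blockX T X Sω n (lp.single 2 0 (h n)))
      (fun _ => (0 : lp (fun _ : ℕ => H) 2))
    simp only [Finset.sum_const_zero] at hmk
    exact hmk.symm
  calc ‖∑ n ∈ Finset.range (N + 1), (β n)⁻¹ • blockX T X Sω n (lp.single 2 0 (h n))‖
      = ‖(WithLp.prodContinuousLinearEquiv 2 ℂ K (lp (fun _ : ℕ => H) 2)).symm
          (∑ n ∈ Finset.range (N + 1), (β n)⁻¹ • blockX T X Sω n (lp.single 2 0 (h n)), 0)‖ := by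
        rw [norm_esymm_fst]
    _ ≤ s * Real.sqrt (∑ n ∈ Finset.range (N + 1), ‖h n‖ ^ 2) := by
        rw [← key]; exact hs N h


/-- let `Sω` be a power bounded unilateral weighted shift on `ℓ²(H)` with
strictly positive weights (power boundedness being expressed by
`sup_{n,k} β(n+k)/β(n) < ∞`), let `T` be similar to a contraction and
`X : ℓ²(H) → K` bounded. If `R(X) = [[T, X],[0, Sω]]` is `β`-quadratically near
`R(0) = T ⊕ Sω` modulo the first coordinate subspace `H` of `ℓ²(H)`, then `R(X)` is
similar to a contraction. -/
theorem stmt18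
    (ω : ℕ → ℝ) (hω : ∀ k, 0 < ω k)
    (β : ℕ → ℝ) (hβ : ∀ n, β n = ∏ k ∈ Finset.range n, ω k)
    (hpb : ∃ M : ℝ, ∀ n k : ℕ, β (n + k) / β n ≤ M)
    (Sω : lp (fun _ : ℕ => H) 2 →L[ℂ] lp (fun _ : ℕ => H) 2)
    (hS0 : ∀ x : lp (fun _ : ℕ => H) 2, Sω x 0 = 0)
    (hS : ∀ (x : lp (fun _ : ℕ => H) 2) (n : ℕ), Sω x (n + 1) = ω n • x n)
    (T : K →L[ℂ] K) (hT : SimilarToContraction T)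
    (X : lp (fun _ : ℕ => H) 2 →L[ℂ] K)
    (hnear : ∃ s : ℝ, ∀ (N : ℕ) (h : ℕ → H),
      ‖∑ n ∈ Finset.range (N + 1), (β n)⁻¹ •
          ((blockOp T X Sω ^ n - blockOp T 0 Sω ^ n)
            ((WithLp.prodContinuousLinearEquiv 2 ℂ K (lp (fun _ : ℕ => H) 2)).symm
              (0, lp.single 2 0 (h n))))‖ ≤
        s * Real.sqrt (∑ n ∈ Finset.range (N + 1), ‖h n‖ ^ 2)) :
    SimilarToContraction (blockOp T X Sω) := by
  obtain ⟨A, hA⟩ := hT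
  obtain ⟨D, hD⟩ := shift_similar ω hω β hβ hpb Sω hS0 hS
  obtain ⟨Z, hZ⟩ := exists_Z ω hω β hβ Sω hS0 hS T X (hnear_reduce β Sω T X hnear)
  set C : K →L[ℂ] K := (A.symm : K →L[ℂ] K) ∘L T ∘L (A : K →L[ℂ] K) with hC
  set G : lp (fun _ : ℕ => H) 2 →L[ℂ] lp (fun _ : ℕ => H) 2 :=
    (D.symm : lp (fun _ : ℕ => H) 2 →L[ℂ] lp (fun _ : ℕ => H) 2) ∘L Sω ∘L
      (D : lp (fun _ : ℕ => H) 2 →L[ℂ] lp (fun _ : ℕ => H) 2) with hG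
  set M : WithLp 2 (K × lp (fun _ : ℕ => H) 2) →L[ℂ] WithLp 2 (K × lp (fun _ : ℕ => H) 2) :=
    blockOp (A : K →L[ℂ] K)
      (Z ∘L (D : lp (fun _ : ℕ => H) 2 →L[ℂ] lp (fun _ : ℕ => H) 2))
      (D : lp (fun _ : ℕ => H) 2 →L[ℂ] lp (fun _ : ℕ => H) 2) with hM
  set Minv : WithLp 2 (K × lp (fun _ : ℕ => H) 2) →L[ℂ] WithLp 2 (K × lp (fun _ : ℕ => H) 2) :=
    blockOp (A.symm : K →L[ℂ] K) (-((A.symm : K →L[ℂ] K) ∘L Z))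
      (D.symm : lp (fun _ : ℕ => H) 2 →L[ℂ] lp (fun _ : ℕ => H) 2) with hMinv
  have cAA : (A.symm : K →L[ℂ] K) ∘L (A : K →L[ℂ] K) = 1 := by
    ext x; simp
  have cAA' : (A : K →L[ℂ] K) ∘L (A.symm : K →L[ℂ] K) = 1 := by
    ext x; simp
  have cDD : (D.symm : lp (fun _ : ℕ => H) 2 →L[ℂ] lp (fun _ : ℕ => H) 2) ∘L
      (D : lp (fun _ : ℕ => H) 2 →L[ℂ] lp (fun _ : ℕ => H) 2) = 1 := by
    ext x; simp
  have cDD' : (D : lp (fun _ : ℕ => H) 2 →L[ℂ] lp (fun _ : ℕ => H) 2) ∘L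
      (D.symm : lp (fun _ : ℕ => H) 2 →L[ℂ] lp (fun _ : ℕ => H) 2) = 1 := by
    ext x; simp
  have hMinvM : Minv ∘L M = 1 := by
    rw [hMinv, hM, blockOp_comp]
    have c2 : (A.symm : K →L[ℂ] K) ∘L
        (Z ∘L (D : lp (fun _ : ℕ => H) 2 →L[ℂ] lp (fun _ : ℕ => H) 2)) +
        (-((A.symm : K →L[ℂ] K) ∘L Z)) ∘L
          (D : lp (fun _ : ℕ => H) 2 →L[ℂ] lp (fun _ : ℕ => H) 2) = 0 := by
      rw [neg_comp, comp_assoc, add_neg_cancel]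
    rw [cAA, c2, cDD, blockOp_one]
  have hMMinv : M ∘L Minv = 1 := by
    rw [hMinv, hM, blockOp_comp]
    have c2 : (A : K →L[ℂ] K) ∘L (-((A.symm : K →L[ℂ] K) ∘L Z)) +
        (Z ∘L (D : lp (fun _ : ℕ => H) 2 →L[ℂ] lp (fun _ : ℕ => H) 2)) ∘L
          (D.symm : lp (fun _ : ℕ => H) 2 →L[ℂ] lp (fun _ : ℕ => H) 2) = 0 := by
      rw [comp_neg, ← comp_assoc, cAA', comp_assoc, cDD']
      simp only [ContinuousLinearMap.one_def, ContinuousLinearMap.id_comp,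
        ContinuousLinearMap.comp_id]
      exact neg_add_cancel Z
    rw [cAA', c2, cDD', blockOp_one]
  have hconj : blockOp T X Sω ∘L M = M ∘L blockOp C 0 G := by
    rw [hM, blockOp_comp, blockOp_comp]
    have e1 : T ∘L (A : K →L[ℂ] K) = (A : K →L[ℂ] K) ∘L C := by
      ext x; simp [hC]
    have e3 : Sω ∘L (D : lp (fun _ : ℕ => H) 2 →L[ℂ] lp (fun _ : ℕ => H) 2) =
        (D : lp (fun _ : ℕ => H) 2 →L[ℂ] lp (fun _ : ℕ => H) 2) ∘L G := by
      ext y; simp [hG]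
    have e2 : T ∘L (Z ∘L (D : lp (fun _ : ℕ => H) 2 →L[ℂ] lp (fun _ : ℕ => H) 2)) +
        X ∘L (D : lp (fun _ : ℕ => H) 2 →L[ℂ] lp (fun _ : ℕ => H) 2) =
        (A : K →L[ℂ] K) ∘L 0 +
          (Z ∘L (D : lp (fun _ : ℕ => H) 2 →L[ℂ] lp (fun _ : ℕ => H) 2)) ∘L G := by
      ext y
      simp only [add_apply, comp_apply, zero_apply, map_zero, zero_add]
      have hDG : (D : lp (fun _ : ℕ => H) 2 →L[ℂ] lp (fun _ : ℕ => H) 2) (G y) =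
          Sω ((D : lp (fun _ : ℕ => H) 2 →L[ℂ] lp (fun _ : ℕ => H) 2) y) := by
        simp [hG]
      rw [hDG, hZ]
    rw [e1, e2, e3]
  have h1 : M.comp Minv = ContinuousLinearMap.id ℂ (WithLp 2 (K × lp (fun _ : ℕ => H) 2)) := by
    rw [← ContinuousLinearMap.one_def]; exact hMMinv
  have h2 : Minv.comp M = ContinuousLinearMap.id ℂ (WithLp 2 (K × lp (fun _ : ℕ => H) 2)) := by
    rw [← ContinuousLinearMap.one_def]; exact hMinvM
  refine ⟨ContinuousLinearEquiv.equivOfInverse' M Minv h1 h2, ?_⟩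
  have hcoeL : ((ContinuousLinearEquiv.equivOfInverse' M Minv h1 h2) :
      WithLp 2 (K × lp (fun _ : ℕ => H) 2) →L[ℂ] WithLp 2 (K × lp (fun _ : ℕ => H) 2)) = M := rfl
  have hcoeLs : ((ContinuousLinearEquiv.equivOfInverse' M Minv h1 h2).symm :
      WithLp 2 (K × lp (fun _ : ℕ => H) 2) →L[ℂ] WithLp 2 (K × lp (fun _ : ℕ => H) 2)) = Minv :=
    rfl
  rw [hcoeL, hcoeLs, hconj, ← comp_assoc, hMinvM, ContinuousLinearMap.one_def,
    ContinuousLinearMap.id_comp]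
  exact blockOp_norm_le C G hA hD
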